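/- Let K be a commutative ring, v : ℕ → K, and A defined by the standard two-weight recurrence. Then A^{v,0}(n,k) equals the elementary symmetric function e_{n−k}(v_0, v_1, ..., v_{n−1}), and A^{0,v}(n,k) equals the complete homogeneous symmetric function h_{n−k}(v_0, v_1, ..., v_k). -/

import Mathlib

open Finset

/-- The generalized two-weight array `A^{v,w}(n,k)`. -/
def A {K : Type*} [CommRing K] (v w : ℕ → K) : ℕ → ℕ → K
  | 0, 0 => 1
  | 0, _ + 1 => 0
  | n + 1, 0 => (v n + w 0) * A v w n 0
  | n + 1, k + 1 => A v w n k + (v n + w (k + 1)) * A v w n (k + 1)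

/-!
For `w = 0` the recurrence is the one satisfied by the coefficients of `∏_{i<n} (X + v_i)`:
multiplying by `X + v_n` shifts the coefficients and adds `v_n` times them. Vieta's formulas
then identify the coefficient of `X^k` with `e_{n-k}(v_0, …, v_{n-1})`.

For `v = 0`, write `H(m, k) = h_m(v_0, …, v_k)`. Splitting the multisets according to whether
they contain `k + 1` gives `H(m + 1, k + 1) = H(m + 1, k) + v_{k+1} H(m, k + 1)`, which is the
recurrence of `A^{0,v}(m + k, k)`; the boundary values `A(k, k) = 1` and `A(m, 0) = v_0^m` match
`H(0, k)` and `H(m, 0)`.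
-/

namespace Fin

theorem monotone_snoc {α : Type*} [Preorder α] {m : ℕ} {g : Fin m → α} (hg : Monotone g)
    {x : α} (hx : ∀ i, g i ≤ x) : Monotone (snoc g x : Fin (m + 1) → α) := by
  intro a b hab
  rcases b.eq_castSucc_or_eq_last with ⟨b, rfl⟩ | rfl
  · rcases a.eq_castSucc_or_eq_last with ⟨a, rfl⟩ | rfl
    · simpa using hg (castSucc_le_castSucc_iff.mp hab)
    · exact absurd hab (castSucc_lt_last b).not_ge
  · rcases a.eq_castSucc_or_eq_last with ⟨a, rfl⟩ | rfl
    · simpa using hx a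
    · rfl

end Fin

section

variable {K : Type*} [CommRing K]

theorem A_eq_zero_of_lt (v w : ℕ → K) {n k : ℕ} (h : n < k) : A v w n k = 0 := by
  induction n generalizing k with
  | zero => obtain ⟨k, rfl⟩ := Nat.exists_eq_add_one_of_ne_zero h.ne'; rfl
  | succ n ih =>
    obtain ⟨k, rfl⟩ := Nat.exists_eq_add_one_of_ne_zero (by omega : k ≠ 0)
    rw [A, ih (by omega), ih (by omega), mul_zero, add_zero]

theorem A_self (v w : ℕ → K) (n : ℕ) : A v w n n = 1 := by
  induction n with
  | zero => rfl
  | succ n ih => rw [A, ih, A_eq_zero_of_lt v w n.lt_succ_self, mul_zero, add_zero]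

theorem A_zero_left_zero_right (v : ℕ → K) (n : ℕ) : A (fun _ => 0) v n 0 = v 0 ^ n := by
  induction n with
  | zero => rw [pow_zero]; rfl
  | succ n ih => rw [A, ih, zero_add, pow_succ, mul_comm]

section Elementary

open Polynomial

theorem A_zero_right_eq_coeff (v : ℕ → K) (n k : ℕ) :
    A v (fun _ => 0) n k = (∏ i ∈ range n, (X + C (v i))).coeff k := by
  induction n generalizing k with
  | zero => cases k <;> simp [A, coeff_one]
  | succ n ih =>
    rw [prod_range_succ, mul_add]
    cases k with
    | zero => simp [A, ih, mul_comm]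
    | succ k => simp [A, ih, mul_comm]

theorem A_zero_right_eq_esymm (v : ℕ → K) {n k : ℕ} (hk : k ≤ n) :
    A v (fun _ => 0) n k = ∑ S ∈ (range n).powersetCard (n - k), ∏ i ∈ S, v i := by
  simpa [A_zero_right_eq_coeff] using prod_X_add_C_coeff (range n) v (k := k) (by simpa using hk)

end Elementary

section Complete

def monotoneMaps (m k : ℕ) : Finset (Fin m → Fin (k + 1)) :=
  univ.filter fun f => ∀ a b : Fin m, a ≤ b → f a ≤ f b

theorem mem_monotoneMaps {m k : ℕ} {f : Fin m → Fin (k + 1)} :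
    f ∈ monotoneMaps m k ↔ Monotone f := by
  simp [monotoneMaps, Monotone]

/-- `h_m(v_0, …, v_k)`: a multiset of size `m` in `{0, …, k}` is encoded by its sorted
enumeration `Fin m → Fin (k + 1)`. -/
def completeSum (v : ℕ → K) (m k : ℕ) : K :=
  ∑ f ∈ monotoneMaps m k, ∏ j, v (f j)

theorem completeSum_zero_left (v : ℕ → K) (k : ℕ) : completeSum v 0 k = 1 := by
  simp [completeSum, monotoneMaps]

theorem completeSum_zero_right (v : ℕ → K) (m : ℕ) : completeSum v m 0 = v 0 ^ m := by
  simp [completeSum, monotoneMaps, Subsingleton.elim _ (0 : Fin 1)]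

theorem sum_monotoneMaps_last_ne (v : ℕ → K) (m k : ℕ) :
    ∑ f ∈ monotoneMaps (m + 1) (k + 1) with f (Fin.last m) ≠ Fin.last (k + 1), ∏ j, v (f j) =
      completeSum v (m + 1) k := by
  have ne_last {f : Fin (m + 1) → Fin (k + 2)} (hf : Monotone f)
      (hlast : f (Fin.last m) ≠ Fin.last (k + 1)) (j : Fin (m + 1)) : f j ≠ Fin.last (k + 1) :=
    ((hf (Fin.le_last j)).trans_lt (Fin.lt_last_iff_ne_last.mpr hlast)).ne
  refine sum_nbij' (fun f j => (Fin.last k).predAbove (f j)) (fun g j => (g j).castSucc)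
    ?_ ?_ ?_ ?_ ?_
  · intro f hf
    simp only [mem_filter, mem_monotoneMaps] at hf ⊢
    exact (Fin.predAbove_right_monotone _).comp hf.1
  · intro g hg
    simp only [mem_filter, mem_monotoneMaps] at hg ⊢
    exact ⟨Fin.strictMono_castSucc.monotone.comp hg, (Fin.castSucc_lt_last _).ne⟩
  · intro f hf
    simp only [mem_filter, mem_monotoneMaps] at hf
    funext j
    simp [ne_last hf.1 hf.2 j]
  · intro g _
    funext j
    exact Fin.predAbove_last_castSucc
  · intro f hf
    simp only [mem_filter, mem_monotoneMaps] at hf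
    refine prod_congr rfl fun j _ => ?_
    simp [ne_last hf.1 hf.2 j]

theorem sum_monotoneMaps_last_eq (v : ℕ → K) (m k : ℕ) :
    ∑ f ∈ monotoneMaps (m + 1) (k + 1) with f (Fin.last m) = Fin.last (k + 1), ∏ j, v (f j) =
      v (k + 1) * completeSum v m (k + 1) := by
  rw [completeSum, mul_sum]
  refine sum_nbij' Fin.init (fun g => Fin.snoc g (Fin.last (k + 1))) ?_ ?_ ?_ ?_ ?_
  · intro f hf
    simp only [mem_filter, mem_monotoneMaps] at hf ⊢
    exact hf.1.comp Fin.strictMono_castSucc.monotone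
  · intro g hg
    simp only [mem_filter, mem_monotoneMaps] at hg ⊢
    exact ⟨Fin.monotone_snoc hg fun _ => Fin.le_last _, Fin.snoc_last _ _⟩
  · intro f hf
    simp only [mem_filter, mem_monotoneMaps] at hf
    rw [← hf.2, Fin.snoc_init_self]
  · intro g _
    exact Fin.init_snoc _ _
  · intro f hf
    simp only [mem_filter, mem_monotoneMaps] at hf
    rw [Fin.prod_univ_castSucc, hf.2, mul_comm]
    rfl

theorem completeSum_succ_succ (v : ℕ → K) (m k : ℕ) :
    completeSum v (m + 1) (k + 1) =
      completeSum v (m + 1) k + v (k + 1) * completeSum v m (k + 1) := by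
  rw [completeSum, ← sum_filter_not_add_sum_filter _ (fun f => f (Fin.last m) = Fin.last (k + 1)),
    sum_monotoneMaps_last_ne, sum_monotoneMaps_last_eq]

end Complete

theorem A_zero_left_add_eq_completeSum (v : ℕ → K) (m k : ℕ) :
    A (fun _ => 0) v (m + k) k = completeSum v m k := by
  induction m generalizing k with
  | zero => rw [zero_add, A_self, completeSum_zero_left]
  | succ m ihm =>
    induction k with
    | zero => rw [add_zero, A_zero_left_zero_right, completeSum_zero_right]
    | succ k ihk =>
      rw [show m + 1 + (k + 1) = (m + 1 + k) + 1 by omega, A, ihk, zero_add,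
        show m + 1 + k = m + (k + 1) by omega, ihm, completeSum_succ_succ]

end

theorem stmt_13 {K : Type*} [CommRing K] (v : ℕ → K) (n k : ℕ) (hk : k ≤ n) :
    (A v (fun _ => 0) n k =
        ∑ S ∈ (Finset.range n).powersetCard (n - k), ∏ i ∈ S, v i) ∧
      (A (fun _ => 0) v n k =
        ∑ f ∈ (Finset.univ : Finset (Fin (n - k) → Fin (k + 1))).filter
            (fun f => ∀ a b : Fin (n - k), a ≤ b → f a ≤ f b),
          ∏ j : Fin (n - k), v (f j)) := by
  refine ⟨A_zero_right_eq_esymm v hk, ?_⟩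
  obtain ⟨m, rfl⟩ := Nat.exists_eq_add_of_le' hk
  rw [Nat.add_sub_cancel, A_zero_left_add_eq_completeSum]
  rfl
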